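/- arXiv:2007.07955 — 4 statements merged into one kernel-verified Lean document; each statement's English description precedes it below -/
import Mathlib

section
/- Let X be a metric space, d a selfadjoint metric on the double of X whose class is a projection, and set A_n = {x ∈ X : d(x,x') ≤ n} for n ∈ ℕ. Then {A_n} is an expanding sequence, i.e., the (1/2)-neighborhood N_{1/2}(A_n) is contained in A_{n+1} for every n with A_n nonempty. -/
/-! Selfadjointness and the triangle inequality through the two copies make `x ↦ d(x, x')`
2-Lipschitz, so moving a distance at most `1/2` away from `A_n` raises `d(x, x')` by at most `1`. -/

open Metric

theorem le_mul_infDist_add {X : Type*} [PseudoMetricSpace X] {s : Set X} (hs : s.Nonempty)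
    {x : X} {L a c : ℝ} (hL : 0 ≤ L) (h : ∀ y ∈ s, a ≤ L * dist x y + c) :
    a ≤ L * infDist x s + c := by
  have : a - c ≤ L * infDist x s := by
    rw [infDist_eq_iInf, Real.mul_iInf_of_nonneg hL]
    have := hs.to_subtype
    exact le_ciInf fun y => by linarith [h y y.2]
  linarith

theorem diag_le_two_mul_dist_add {X : Type*} [PseudoMetricSpace X] {d : X → X → ℝ}
    (hsym : ∀ x y, d x y = d y x) (htri : ∀ x y z, d x z ≤ dist x y + d y z) (x y : X) :
    d x x ≤ 2 * dist x y + d y y :=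
  calc d x x ≤ dist x y + d y x := htri x y x
    _ = dist x y + d x y := by rw [hsym]
    _ ≤ dist x y + (dist x y + d y y) := by gcongr; exact htri x y y
    _ = 2 * dist x y + d y y := by ring

theorem stmt2_general {X : Type*} [MetricSpace X] (d : X → X → ℝ)
    (hsym : ∀ x y, d x y = d y x)
    (htri : ∀ x y z, d x z ≤ dist x y + d y z) :
    ∀ n : ℕ, {y : X | d y y ≤ (n : ℝ)}.Nonempty →
      ∀ x : X, Metric.infDist x {y : X | d y y ≤ (n : ℝ)} ≤ 1 / 2 →
        x ∈ {y : X | d y y ≤ (n : ℝ) + 1} := by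
  intro n hne x hx
  have hdiag : d x x ≤ 2 * infDist x {y : X | d y y ≤ (n : ℝ)} + n :=
    le_mul_infDist_add hne zero_le_two fun y (hy : d y y ≤ n) =>
      (diag_le_two_mul_dist_add hsym htri x y).trans (by linarith)
  show d x x ≤ (n : ℝ) + 1
  linarith

/-- If `d` is a selfadjoint metric on the double of `X` whose class
is a projection, then the sets `A_n = {x : d(x,x') ≤ n}` form an expanding
sequence: `N_{1/2}(A_n) ⊆ A_{n+1}` whenever `A_n` is nonempty.
Here `d : X → X → ℝ` is the cross-distance `d(x,y')`. -/
theorem stmt2 {X : Type*} [MetricSpace X] (d : X → X → ℝ)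
    (hpos : ∀ x y, 0 < d x y)
    (hsym : ∀ x y, d x y = d y x)
    (htri : ∀ x y z, d x z ≤ dist x y + d y z)
    (dX' : X → ℝ) (hdX' : ∀ x, IsGLB {r : ℝ | ∃ y : X, r = d x y} (dX' x))
    (hproj : ∃ α : ℝ, 0 ≤ α ∧ ∃ β : ℝ, 1 ≤ β ∧
      ∀ x : X, -α + (1 / β) * d x x ≤ dX' x) :
    ∀ n : ℕ, {y : X | d y y ≤ (n : ℝ)}.Nonempty →
      ∀ x : X, Metric.infDist x {y : X | d y y ≤ (n : ℝ)} ≤ 1 / 2 →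
        x ∈ {y : X | d y y ≤ (n : ℝ) + 1} :=
  stmt2_general d hsym htri
end

section
/- Let X be a metric space and 𝒜 = {A_n}, 𝒟 = {D_n} expanding sequences with associated metrics d_𝒜, d_𝒟 on the double of X. If the composition class [d_𝒜 d_𝒟]_c is the zero element of M^c(X), then the set A_n ∩ D_n is bounded for every n ∈ ℕ. -/
/-!
Taking `y = x` in the composition and `u = x` in both infima gives
`comp x x ≤ δ_𝒜 x + δ_𝒟 x ≤ 2n` on `A n ∩ D n`, while the coarse lower bound gives
`φ (2 d(x, x₀) + 1) ≤ comp x x`. Since `φ → ∞`, `d(x, x₀)` is bounded on `A n ∩ D n`.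
-/

open Filter

lemma le_of_mem_of_forall_diff_eq {X : Type*} {A : ℕ → Set X} (hA0 : A 0 = ∅) {δ : X → ℝ}
    (hδ : ∀ n : ℕ, ∀ u ∈ A (n + 1) \ A n, δ u = (n : ℝ) + 1) {x : X} :
    ∀ {n : ℕ}, x ∈ A n → δ x ≤ n
  | 0, hx => by simp [hA0] at hx
  | n + 1, hx => by
    by_cases hxn : x ∈ A n
    · have := le_of_mem_of_forall_diff_eq hA0 hδ hxn
      push_cast
      linarith
    · push_cast
      exact (hδ n x ⟨hx, hxn⟩).le

lemma IsGLB.le_diag_weight {X : Type*} [PseudoMetricSpace X] {δ : X → ℝ} {x : X} {d : ℝ}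
    (h : IsGLB {r : ℝ | ∃ u : X, r = dist x u + δ u + dist u x} d) : d ≤ δ x := by
  simpa using h.1 ⟨x, rfl⟩

theorem stmt11_general {X : Type*} [MetricSpace X] (A D : ℕ → Set X)
    (hA0 : A 0 = ∅) (hD0 : D 0 = ∅)
    (δA δD : X → ℝ)
    (hδA : ∀ n : ℕ, ∀ u ∈ A (n + 1) \ A n, δA u = (n : ℝ) + 1)
    (hδD : ∀ n : ℕ, ∀ u ∈ D (n + 1) \ D n, δD u = (n : ℝ) + 1)
    (dA dD : X → X → ℝ)
    (hdA : ∀ x y, IsGLB {r : ℝ | ∃ u : X, r = dist x u + δA u + dist u y} (dA x y))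
    (hdD : ∀ x y, IsGLB {r : ℝ | ∃ u : X, r = dist x u + δD u + dist u y} (dD x y))
    (comp : X → X → ℝ)
    (hcomp : ∀ x z, IsGLB {r : ℝ | ∃ y : X, r = dA x y + dD y z} (comp x z))
    (hzero : ∃ x₀ : X, ∃ φ ψ : ℝ → ℝ,
      Monotone φ ∧ Tendsto φ atTop atTop ∧
      Monotone ψ ∧ Tendsto ψ atTop atTop ∧
      ∀ x y : X, φ (dist x x₀ + 1 + dist x₀ y) ≤ comp x y ∧
        comp x y ≤ ψ (dist x x₀ + 1 + dist x₀ y)) :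
    ∀ n : ℕ, Bornology.IsBounded (A n ∩ D n) := by
  intro n
  obtain ⟨x₀, φ, ψ, -, hφ, -, -, hbd⟩ := hzero
  obtain ⟨R, hR⟩ := tendsto_atTop_atTop.1 hφ (2 * n + 1)
  refine (Metric.isBounded_closedBall (x := x₀) (r := R)).subset fun x ⟨hxA, hxD⟩ => ?_
  have hcomp_le : comp x x ≤ 2 * n :=
    calc comp x x ≤ dA x x + dD x x := (hcomp x x).1 ⟨x, rfl⟩
      _ ≤ δA x + δD x := add_le_add (hdA x x).le_diag_weight (hdD x x).le_diag_weight
      _ ≤ n + n := add_le_add (le_of_mem_of_forall_diff_eq hA0 hδA hxA)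
          (le_of_mem_of_forall_diff_eq hD0 hδD hxD)
      _ = 2 * n := by ring
  have hφx : φ (dist x x₀ + 1 + dist x₀ x) ≤ 2 * n := (hbd x x).1.trans hcomp_le
  rw [Metric.mem_closedBall]
  by_contra! hfar
  have := hR (dist x x₀ + 1 + dist x₀ x) (by linarith [dist_nonneg (x := x₀) (y := x)])
  linarith

/-- Let `𝒜 = {A_n}`, `𝒟 = {D_n}` be expanding sequences (with
convention `A_0 = D_0 = ∅`), `d_𝒜`, `d_𝒟` the associated metrics on the double,
and `comp = d_𝒜 ∘ d_𝒟` their composition. If `[comp]_c` is the zero element of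
`M^c(X)`, i.e. `comp` is coarsely equivalent to `d_{x₀}(x,y') =
d_X(x,x₀)+1+d_X(x₀,y)` for some `x₀`, then `A_n ∩ D_n` is bounded for all `n`. -/
theorem stmt11 {X : Type*} [MetricSpace X] (A D : ℕ → Set X)
    (hA0 : A 0 = ∅) (hD0 : D 0 = ∅)
    (hAne : ∃ n, (A n).Nonempty) (hDne : ∃ n, (D n).Nonempty)
    (hAexp : ∀ n, (A n).Nonempty →
      ∀ x : X, Metric.infDist x (A n) ≤ 1 / 2 → x ∈ A (n + 1))
    (hDexp : ∀ n, (D n).Nonempty →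
      ∀ x : X, Metric.infDist x (D n) ≤ 1 / 2 → x ∈ D (n + 1))
    (hAunion : ⋃ n, A n = Set.univ) (hDunion : ⋃ n, D n = Set.univ)
    (δA δD : X → ℝ)
    (hδA : ∀ n : ℕ, ∀ u ∈ A (n + 1) \ A n, δA u = (n : ℝ) + 1)
    (hδD : ∀ n : ℕ, ∀ u ∈ D (n + 1) \ D n, δD u = (n : ℝ) + 1)
    (dA dD : X → X → ℝ)
    (hdA : ∀ x y, IsGLB {r : ℝ | ∃ u : X, r = dist x u + δA u + dist u y} (dA x y))
    (hdD : ∀ x y, IsGLB {r : ℝ | ∃ u : X, r = dist x u + δD u + dist u y} (dD x y))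
    (comp : X → X → ℝ)
    (hcomp : ∀ x z, IsGLB {r : ℝ | ∃ y : X, r = dA x y + dD y z} (comp x z))
    (hzero : ∃ x₀ : X, ∃ φ ψ : ℝ → ℝ,
      Monotone φ ∧ Tendsto φ atTop atTop ∧
      Monotone ψ ∧ Tendsto ψ atTop atTop ∧
      ∀ x y : X, φ (dist x x₀ + 1 + dist x₀ y) ≤ comp x y ∧
        comp x y ≤ ψ (dist x x₀ + 1 + dist x₀ y)) :
    ∀ n : ℕ, Bornology.IsBounded (A n ∩ D n) :=
  stmt11_general A D hA0 hD0 δA δD hδA hδD dA dD hdA hdD comp hcomp hzero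
end

section
/- Let X be a metric space, 𝒜 = {A_n} an expanding sequence, and B ⊆ X a nonempty subset. Define d_{ℰ_B}(x,y') = d_X(x,B) + 1 + d_X(y,B). If d_{ℰ_B}(x,y') ≥ d_𝒜(x,y') for all x,y ∈ X (i.e., d_{ℰ_B} ⪯ d_𝒜 in the partial order), then there exists n ∈ ℕ such that B ⊆ A_n. -/
/-!
Take `b ∈ B`. Since `d(b, B) = 0`, the hypothesis gives `d_𝒜(b, b') ≤ 1 < 3/2`, so some `u`
satisfies `2 d(b, u) + δ(u) < 3/2`. As `δ ≥ 1` with `δ(u) = 1` only on `A₁`, this forces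
`u ∈ A₁` and `d(b, u) < 1/4`; hence `b` lies in the `1/2`-neighbourhood of `A₁`, i.e. `b ∈ A₂`.
-/

open Set

theorem exists_mem_succ_diff {α : Type*} {A : ℕ → Set α} (hA0 : A 0 = ∅)
    (hunion : ⋃ n, A n = univ) (u : α) : ∃ m, u ∈ A (m + 1) \ A m := by
  by_contra! hstep
  simp only [mem_sdiff, not_and, not_not] at hstep
  have hnot : ∀ n, u ∉ A n := by
    intro n
    induction n with
    | zero => simp [hA0]
    | succ n ih => exact fun hu => ih (hstep n hu)
  obtain ⟨n, hn⟩ := mem_iUnion.mp (hunion ▸ mem_univ u)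
  exact hnot n hn

theorem stmt12_general {X : Type*} [MetricSpace X] (A : ℕ → Set X) (hA0 : A 0 = ∅)
    (hexp : ∀ n, (A n).Nonempty →
      ∀ x : X, Metric.infDist x (A n) ≤ 1 / 2 → x ∈ A (n + 1))
    (hunion : ⋃ n, A n = Set.univ)
    (δ : X → ℝ) (hδ : ∀ n : ℕ, ∀ u ∈ A (n + 1) \ A n, δ u = (n : ℝ) + 1)
    (dA : X → X → ℝ)
    (hdA : ∀ x y, IsGLB {r : ℝ | ∃ u : X, r = dist x u + δ u + dist u y} (dA x y))
    (B : Set X)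
    (hord : ∀ x y : X, dA x y ≤ Metric.infDist x B + 1 + Metric.infDist y B) :
    ∃ n : ℕ, B ⊆ A n := by
  refine ⟨2, fun b hb => ?_⟩
  have hdA_le : dA b b ≤ 1 := by
    simpa [Metric.infDist_zero_of_mem hb] using hord b b
  obtain ⟨_, ⟨u, rfl⟩, -, hu⟩ := (hdA b b).exists_between (by linarith : dA b b < 3 / 2)
  obtain ⟨m, hum⟩ := exists_mem_succ_diff hA0 hunion u
  rw [hδ m u hum, dist_comm u b] at hu
  have hm : m = 0 := by
    have : (m : ℝ) < 1 := by linarith [dist_nonneg (x := b) (y := u)]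
    exact Nat.lt_one_iff.mp (by exact_mod_cast this)
  subst hm
  have hu₁ : u ∈ A 1 := hum.1
  refine hexp 1 ⟨u, hu₁⟩ b ((Metric.infDist_le_dist_of_mem hu₁).trans ?_)
  push_cast at hu
  linarith

/-- If `B ⊆ X` is nonempty and
`d_{ℰ_B}(x,y') = d_X(x,B) + 1 + d_X(y,B)` dominates pointwise from above the
metric `d_𝒜` of an expanding sequence `𝒜 = {A_n}` (i.e. `d_{ℰ_B} ⪯ d_𝒜`),
then `B ⊆ A_n` for some `n`. -/
theorem stmt12 {X : Type*} [MetricSpace X] (A : ℕ → Set X) (hA0 : A 0 = ∅)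
    (hne : ∃ n, (A n).Nonempty)
    (hexp : ∀ n, (A n).Nonempty →
      ∀ x : X, Metric.infDist x (A n) ≤ 1 / 2 → x ∈ A (n + 1))
    (hunion : ⋃ n, A n = Set.univ)
    (δ : X → ℝ) (hδ : ∀ n : ℕ, ∀ u ∈ A (n + 1) \ A n, δ u = (n : ℝ) + 1)
    (dA : X → X → ℝ)
    (hdA : ∀ x y, IsGLB {r : ℝ | ∃ u : X, r = dist x u + δ u + dist u y} (dA x y))
    (B : Set X) (hB : B.Nonempty)
    (hord : ∀ x y : X, dA x y ≤ Metric.infDist x B + 1 + Metric.infDist y B) :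
    ∃ n : ℕ, B ⊆ A n :=
  stmt12_general A hA0 hexp hunion δ hδ dA hdA B hord
end

section
/- Let {u_n} and {v_n} be two approximate units of the same closed ideal J ⊆ C_b(X), each satisfying u_n u_{n+1} = u_n (resp. v_n v_{n+1} = v_n). Set A_n = {x : u_n(x)=1} and B_n = {x : v_n(x)=1}. Then for every n there exists m such that A_n ⊆ B_{m+1}, and symmetrically for every n there exists m with B_n ⊆ A_{m+1}. -/
/-! Choose `m` with `‖v m * u n - u n‖ < 1`. Where `u n x = 1` this gives `‖v m x - 1‖ < 1`,
so `v m x ≠ 0`, and then `v m * v (m + 1) = v m` forces `v (m + 1) x = 1`. -/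

open Filter

namespace BoundedContinuousFunction

variable {X R : Type*} [TopologicalSpace X] [SeminormedRing R]

theorem apply_eq_one_of_mul_eq_self [NoZeroDivisors R] {f g : X →ᵇ R} (h : f * g = f) {x : X}
    (hx : f x ≠ 0) : g x = 1 := by
  have hfx : f x * g x = f x * 1 := by simpa using congrArg (· x) h
  exact mul_left_cancel₀ hx hfx

theorem apply_ne_zero_of_norm_mul_sub_lt_one [NormOneClass R] {f g : X →ᵇ R}
    (hfg : ‖f * g - g‖ < 1) {x : X} (hx : g x = 1) : f x ≠ 0 := by
  intro hfx
  have hle := norm_coe_le_norm (f * g - g) x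
  simp only [coe_sub, coe_mul, Pi.sub_apply, Pi.mul_apply, hx, hfx, zero_mul, zero_sub,
    norm_neg, norm_one] at hle
  exact hle.not_gt hfg

theorem exists_setOf_eq_one_subset [NoZeroDivisors R] [NormOneClass R] {g : X →ᵇ R}
    {v : ℕ → X →ᵇ R} (hv : Tendsto (fun m => ‖v m * g - g‖) atTop (nhds 0))
    (hvmul : ∀ m, v m * v (m + 1) = v m) :
    ∃ m, {x | g x = 1} ⊆ {x | v (m + 1) x = 1} := by
  obtain ⟨m, hm⟩ := (hv.eventually (gt_mem_nhds one_pos)).exists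
  exact ⟨m, fun x hx =>
    apply_eq_one_of_mul_eq_self (hvmul m) (apply_ne_zero_of_norm_mul_sub_lt_one hm hx)⟩

end BoundedContinuousFunction

theorem stmt15_general {X : Type*} [MetricSpace X]
    (J : Ideal (BoundedContinuousFunction X ℂ))
    (u v : ℕ → BoundedContinuousFunction X ℂ)
    (humem : ∀ n, u n ∈ J) (hvmem : ∀ n, v n ∈ J)
    (hau : ∀ f ∈ J, Tendsto (fun n => ‖u n * f - f‖) atTop (nhds 0))
    (hav : ∀ f ∈ J, Tendsto (fun n => ‖v n * f - f‖) atTop (nhds 0))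
    (humul : ∀ n, u n * u (n + 1) = u n)
    (hvmul : ∀ n, v n * v (n + 1) = v n) :
    (∀ n, ∃ m, {x : X | u n x = 1} ⊆ {x : X | v (m + 1) x = 1}) ∧
    (∀ n, ∃ m, {x : X | v n x = 1} ⊆ {x : X | u (m + 1) x = 1}) :=
  ⟨fun n => BoundedContinuousFunction.exists_setOf_eq_one_subset (hav _ (humem n)) hvmul,
    fun n => BoundedContinuousFunction.exists_setOf_eq_one_subset (hau _ (hvmem n)) humul⟩

/-- If `{u_n}` and `{v_n}` are two approximate units of the same
closed ideal `J ⊆ C_b(X)`, each satisfying `u_n u_{n+1} = u_n`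
(resp. `v_n v_{n+1} = v_n`), and `A_n = {x : u_n(x) = 1}`,
`B_n = {x : v_n(x) = 1}`, then for every `n` there is `m` with
`A_n ⊆ B_{m+1}`, and symmetrically. -/
theorem stmt15 {X : Type*} [MetricSpace X]
    (J : Ideal (BoundedContinuousFunction X ℂ))
    (hJclosed : IsClosed (J : Set (BoundedContinuousFunction X ℂ)))
    (u v : ℕ → BoundedContinuousFunction X ℂ)
    (humem : ∀ n, u n ∈ J) (hvmem : ∀ n, v n ∈ J)
    (hau : ∀ f ∈ J, Tendsto (fun n => ‖u n * f - f‖) atTop (nhds 0))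
    (hav : ∀ f ∈ J, Tendsto (fun n => ‖v n * f - f‖) atTop (nhds 0))
    (humul : ∀ n, u n * u (n + 1) = u n)
    (hvmul : ∀ n, v n * v (n + 1) = v n) :
    (∀ n, ∃ m, {x : X | u n x = 1} ⊆ {x : X | v (m + 1) x = 1}) ∧
    (∀ n, ∃ m, {x : X | v n x = 1} ⊆ {x : X | u (m + 1) x = 1}) :=
  stmt15_general J u v humem hvmem hau hav humul hvmul
end
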